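/- arXiv:1811.01203 — 2 statements merged into one kernel-verified Lean document; each statement's English description precedes it below -/
import Mathlib

section
/- Let c ∈ (0,3] and let f be analytic on the unit disk with f(0)=0, f'(0)=1, f'(z) ≠ 0, and Re(1 + zf''(z)/f'(z)) > 1 − c/2 for all z in the unit disk. Then the first logarithmic coefficient satisfies |γ_1| ≤ c/4, with equality for the function f_c with 1 + zf_c''(z)/f_c'(z) = 1 + cz/(1−z). -/
open Complex Metric Real

noncomputable section

/-- `γ` is the sequence of logarithmic coefficients of `f` on the unit disk:
`log (f z / z) = 2 * ∑ γ n z^n`, where the branch of log is the analytic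
function `g` with `g 0 = 0` and `exp (g z) = f z / z`. -/
def IsLogCoeff (f : ℂ → ℂ) (γ : ℕ → ℂ) : Prop :=
  ∃ g : ℂ → ℂ, AnalyticOnNhd ℂ g (Metric.ball 0 1) ∧ g 0 = 0 ∧
    (∀ z ∈ Metric.ball (0:ℂ) 1, z ≠ 0 → Complex.exp (g z) = f z / z) ∧
    (∀ z ∈ Metric.ball (0:ℂ) 1, HasSum (fun n : ℕ => 2 * γ (n + 1) * z ^ (n + 1)) (g z))

/-- `g` is subordinate to `h` on the unit disk. -/
def Subordinate (g h : ℂ → ℂ) : Prop :=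
  ∃ φ : ℂ → ℂ, AnalyticOnNhd ℂ φ (Metric.ball 0 1) ∧ φ 0 = 0 ∧
    (∀ z ∈ Metric.ball (0:ℂ) 1, φ z ∈ Metric.ball (0:ℂ) 1) ∧
    ∀ z ∈ Metric.ball (0:ℂ) 1, g z = h (φ z)


/-!
With `p z = z f''(z) / f'(z)` we have `p 0 = 0`, `p'(0) = f''(0)` and `Re p > -c/2`, so
`q = p / (p + c)` maps the disk into itself with `q 0 = 0` and `q'(0) = p'(0) / c`; Schwarz's
lemma gives `|f''(0)| ≤ c`. Writing `f z = z exp (2 γ₁ z + ⋯)` shows `f''(0) = 4 γ₁`.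
For the extremal function, `p z = c z / (1 - z)`, so `f''(0) = c`.
-/

open Topology NNReal

theorem hasFPowerSeriesOnBall_ofScalars_of_hasSum {g : ℂ → ℂ} {a : ℕ → ℂ} {r : ℝ≥0}
    (hr : 0 < r) (h : ∀ z ∈ ball (0 : ℂ) r, HasSum (fun n => a n * z ^ n) (g z)) :
    HasFPowerSeriesOnBall g (FormalMultilinearSeries.ofScalars ℂ a) 0 r where
  r_le := ENNReal.le_of_forall_nnreal_lt fun s hs => by
    have hs' : (s : ℂ) ∈ ball (0 : ℂ) r := by simpa using hs
    refine FormalMultilinearSeries.le_radius_of_tendsto _ (l := 0) ?_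
    simpa [FormalMultilinearSeries.ofScalars_norm] using (h s hs').summable.tendsto_atTop_zero.norm
  r_pos := by simpa using hr
  hasSum {z} hz := by
    simpa [FormalMultilinearSeries.ofScalars_apply_eq, mul_comm] using h z (by simpa using hz)

theorem hasDerivAt_id_mul_zero {𝕜 : Type*} [NontriviallyNormedField 𝕜] {w : 𝕜 → 𝕜}
    (hw : DifferentiableAt 𝕜 w 0) : HasDerivAt (fun z => z * w z) (w 0) 0 := by
  simpa using (hasDerivAt_id (0 : 𝕜)).fun_mul hw.hasDerivAt

theorem deriv_deriv_id_mul_zero {h : ℂ → ℂ} (hh : AnalyticAt ℂ h 0) :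
    deriv (deriv fun z => z * h z) 0 = 2 * deriv h 0 := by
  have hderiv : deriv (fun z => z * h z) =ᶠ[𝓝 0] fun z => h z + z * deriv h z := by
    filter_upwards [hh.eventually_analyticAt] with z hz
    simpa using ((hasDerivAt_id z).fun_mul hz.differentiableAt.hasDerivAt).deriv
  rw [hderiv.deriv_eq, ((hh.differentiableAt.hasDerivAt).fun_add
    (hasDerivAt_id_mul_zero hh.deriv.differentiableAt)).deriv]
  ring

theorem IsLogCoeff.deriv_deriv_zero {f : ℂ → ℂ} {γ : ℕ → ℂ} (hγ : IsLogCoeff f γ)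
    (hf0 : f 0 = 0) : deriv (deriv f) 0 = 4 * γ 1 := by
  obtain ⟨g, hg, hg0, hfg, hsum⟩ := hγ
  have hball : ball (0 : ℂ) 1 ∈ 𝓝 0 := ball_mem_nhds 0 one_pos
  have hg' : deriv g 0 = 2 * γ 1 := by
    set a : ℕ → ℂ := Function.update (fun n => 2 * γ n) 0 0
    have ha : ∀ z ∈ ball (0 : ℂ) (1 : ℝ≥0), HasSum (fun n => a n * z ^ n) (g z) := by
      intro z hz
      rw [← hasSum_nat_add_iff' 1]
      simpa [a] using hsum z (by simpa using hz)
    simpa [a, FormalMultilinearSeries.ofScalars_apply_eq] using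
      (hasFPowerSeriesOnBall_ofScalars_of_hasSum one_pos ha).hasFPowerSeriesAt.deriv
  have hf : f =ᶠ[𝓝 0] fun z => z * exp (g z) := by
    filter_upwards [hball] with z hz
    rcases eq_or_ne z 0 with rfl | hz0
    · simp [hf0]
    · rw [hfg z hz hz0, mul_div_cancel₀ _ hz0]
  have hexp : AnalyticAt ℂ (fun z => exp (g z)) 0 := analyticAt_cexp.comp (hg 0 (by simp))
  rw [hf.deriv.deriv_eq, deriv_deriv_id_mul_zero hexp,
    ((hg 0 (by simp)).differentiableAt.hasDerivAt.cexp).deriv,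
    hg0, hg', Complex.exp_zero]
  ring

theorem add_ofReal_ne_zero_of_neg_half_lt_re {w : ℂ} {c : ℝ} (hc : 0 < c)
    (hw : -(c / 2) < w.re) : w + c ≠ 0 := fun h => by
  have := congrArg re h
  simp only [add_re, ofReal_re, zero_re] at this
  linarith

theorem norm_div_add_ofReal_lt_one {w : ℂ} {c : ℝ} (hc : 0 < c) (hw : -(c / 2) < w.re) :
    ‖w / (w + c)‖ < 1 := by
  rw [norm_div, div_lt_one (norm_pos_iff.mpr (add_ofReal_ne_zero_of_neg_half_lt_re hc hw)), ← sq_lt_sq₀ (norm_nonneg _) (norm_nonneg _),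
    ← normSq_eq_norm_sq, ← normSq_eq_norm_sq]
  simp only [normSq_apply, add_re, add_im, ofReal_re, ofReal_im, add_zero]
  nlinarith

theorem norm_deriv_le_of_neg_half_lt_re {p : ℂ → ℂ} {c R : ℝ} (hc : 0 < c) (hR : 0 < R)
    (hp : DifferentiableOn ℂ p (ball 0 R)) (hp0 : p 0 = 0)
    (hre : ∀ z ∈ ball (0 : ℂ) R, -(c / 2) < (p z).re) : ‖deriv p 0‖ ≤ c / R := by
  have hq : DifferentiableOn ℂ (fun z => p z / (p z + c)) (ball 0 R) :=
    hp.div (hp.add_const _) fun z hz => add_ofReal_ne_zero_of_neg_half_lt_re hc (hre z hz)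
  have hmaps : Set.MapsTo (fun z => p z / (p z + c)) (ball 0 R) (closedBall 0 1) :=
    fun z hz => by simpa using (norm_div_add_ofReal_lt_one hc (hre z hz)).le
  have hc' : (c : ℂ) ≠ 0 := ofReal_ne_zero.mpr hc.ne'
  have hq' : deriv (fun z => p z / (p z + c)) 0 = deriv p 0 / c := by
    have hd := (hp.differentiableAt (ball_mem_nhds 0 hR)).hasDerivAt
    rw [(hd.fun_div (hd.add_const (c : ℂ)) (by simpa [hp0] using hc')).deriv, hp0, zero_add, zero_mul, sub_zero, sq, mul_div_mul_right _ _ hc']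
  have := Complex.norm_deriv_le_div_of_mapsTo_ball hq (by simpa [hp0] using hmaps) hR
  rw [hq', norm_div, norm_real, Real.norm_of_nonneg hc.le] at this
  rw [le_div_iff₀ hR]
  rwa [div_le_div_iff₀ hc hR, one_mul] at this

theorem hasDerivAt_mul_deriv_deriv_div_deriv_zero {f : ℂ → ℂ} (hf : AnalyticAt ℂ f 0)
    (hf1 : deriv f 0 = 1) :
    HasDerivAt (fun z => z * deriv (deriv f) z / deriv f z) (deriv (deriv f) 0) 0 := by
  have := hasDerivAt_id_mul_zero
    (hf.deriv.deriv.differentiableAt.div hf.deriv.differentiableAt (by simp [hf1]))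
  simpa [hf1, mul_div_assoc] using this

theorem stmt10_general (c : ℝ) (hc0 : 0 < c)
    (f : ℂ → ℂ) (γ : ℕ → ℂ)
    (hf : AnalyticOnNhd ℂ f (Metric.ball 0 1)) (hf0 : f 0 = 0)
    (hf1 : deriv f 0 = 1)
    (hf' : ∀ z ∈ Metric.ball (0:ℂ) 1, deriv f z ≠ 0)
    (hF : ∀ z ∈ Metric.ball (0:ℂ) 1,
      (1 + z * deriv (deriv f) z / deriv f z).re > 1 - c/2)
    (hγ : IsLogCoeff f γ) :
    ‖γ 1‖ ≤ c / 4 ∧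
      ∀ fc : ℂ → ℂ, ∀ γc : ℕ → ℂ,
        AnalyticOnNhd ℂ fc (Metric.ball 0 1) → fc 0 = 0 → deriv fc 0 = 1 →
        (∀ z ∈ Metric.ball (0:ℂ) 1, deriv fc z ≠ 0) →
        (∀ z ∈ Metric.ball (0:ℂ) 1,
          1 + z * deriv (deriv fc) z / deriv fc z = 1 + (c : ℂ) * z / (1 - z)) →
        IsLogCoeff fc γc → ‖γc 1‖ = c / 4 := by
  have hball : ball (0 : ℂ) 1 ∈ 𝓝 0 := ball_mem_nhds 0 one_pos
  constructor
  · have hp : DifferentiableOn ℂ (fun z => z * deriv (deriv f) z / deriv f z) (ball 0 1) :=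
      ((analyticOnNhd_id.mul hf.deriv.deriv).div hf.deriv hf').differentiableOn
    have hre : ∀ z ∈ ball (0 : ℂ) 1, -(c / 2) < (z * deriv (deriv f) z / deriv f z).re :=
      fun z hz => by have := hF z hz; simp only [add_re, one_re] at this; linarith
    have := norm_deriv_le_of_neg_half_lt_re hc0 one_pos hp (by simp) hre
    rw [(hasDerivAt_mul_deriv_deriv_div_deriv_zero (hf 0 (mem_of_mem_nhds hball)) hf1).deriv,
      hγ.deriv_deriv_zero hf0, norm_mul] at this
    norm_num at this
    linarith
  · intro fc γc hfc hfc0 hfc1 _ hFc hγc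
    have hp : (fun z => z * deriv (deriv fc) z / deriv fc z) =ᶠ[𝓝 0] fun z => c * z / (1 - z) :=
      Filter.eventually_of_mem hball fun z hz => add_left_cancel (hFc z hz)
    have hM : HasDerivAt (fun z : ℂ => c * z / (1 - z)) (c : ℂ) 0 := by
      simpa using ((hasDerivAt_id (0 : ℂ)).const_mul (c : ℂ)).fun_div
        ((hasDerivAt_id (0 : ℂ)).const_sub 1) (by norm_num)
    have h4γ : 4 * γc 1 = c := by
      rw [← hγc.deriv_deriv_zero hfc0]
      exact (hasDerivAt_mul_deriv_deriv_div_deriv_zero (hfc 0 (mem_of_mem_nhds hball)) hfc1).unique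
        (hM.congr_of_eventuallyEq hp)
    rw [eq_div_iff four_ne_zero, ← Real.norm_of_nonneg hc0.le, ← norm_real, ← h4γ, norm_mul]
    norm_num [mul_comm]

theorem stmt10 (c : ℝ) (hc0 : 0 < c) (hc3 : c ≤ 3)
    (f : ℂ → ℂ) (γ : ℕ → ℂ)
    (hf : AnalyticOnNhd ℂ f (Metric.ball 0 1)) (hf0 : f 0 = 0)
    (hf1 : deriv f 0 = 1)
    (hf' : ∀ z ∈ Metric.ball (0:ℂ) 1, deriv f z ≠ 0)
    (hF : ∀ z ∈ Metric.ball (0:ℂ) 1,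
      (1 + z * deriv (deriv f) z / deriv f z).re > 1 - c/2)
    (hγ : IsLogCoeff f γ) :
    ‖γ 1‖ ≤ c / 4 ∧
      ∀ fc : ℂ → ℂ, ∀ γc : ℕ → ℂ,
        AnalyticOnNhd ℂ fc (Metric.ball 0 1) → fc 0 = 0 → deriv fc 0 = 1 →
        (∀ z ∈ Metric.ball (0:ℂ) 1, deriv fc z ≠ 0) →
        (∀ z ∈ Metric.ball (0:ℂ) 1,
          1 + z * deriv (deriv fc) z / deriv fc z = 1 + (c : ℂ) * z / (1 - z)) →
        IsLogCoeff fc γc → ‖γc 1‖ = c / 4 :=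
  stmt10_general c hc0 f γ hf hf0 hf1 hf' hF hγ
end
end

section
/- Let c ∈ (0,3] and let f be analytic on the unit disk with f(0)=0, f'(0)=1, f'(z) ≠ 0, and Re(1 + zf''(z)/f'(z)) > 1 − c/2 for all z in the unit disk. Then the second logarithmic coefficient satisfies |γ_2| ≤ (4c + c²)/48. -/
open Complex Metric Real

noncomputable section

/-!
Put `h z = z * f'' z / f' z`. Since `Re h > -c/2`, the map `w = h / (h + c)` sends the disk into
itself and fixes `0`, so `w z = z * φ z` with `‖φ‖ ≤ 1` by Schwarz's lemma, and the Schwarz–Pick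
inequality `‖φ' 0‖ ≤ 1 - ‖φ 0‖²` bounds the first two Taylor coefficients of `h` by `c`
(Carathéodory). Writing `f z = z * exp (g z)` with `g = 2 ∑ γₙ zⁿ`, these coefficients are `4 γ₁`
and `12 γ₂ - 4 γ₁²`, so `12 ‖γ₂‖ ≤ c + 4 ‖γ₁‖² ≤ c + c² / 4`.
-/

open Set FormalMultilinearSeries
open scoped NNReal ComplexConjugate

theorem iteratedDeriv_eq_factorial_mul_of_hasSum {a : ℕ → ℂ} {g : ℂ → ℂ} {r : ℝ≥0}
    (hr : 0 < r) (h : ∀ z ∈ ball (0 : ℂ) r, HasSum (fun n => a n * z ^ n) (g z)) (n : ℕ) :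
    iteratedDeriv n g 0 = n.factorial * a n := by
  have hP : HasFPowerSeriesOnBall g (ofScalars ℂ a) 0 r := by
    refine ⟨ENNReal.le_of_forall_nnreal_lt fun s hs => ?_, by simpa using hr, fun {y} hy => ?_⟩
    · have hs : (s : ℂ) ∈ ball (0 : ℂ) r := by simpa using hs
      refine (ofScalars ℂ a).le_radius_of_tendsto (l := 0) ?_
      simpa [ofScalars_norm] using (h _ hs).summable.tendsto_atTop_zero.norm
    · simpa [ofScalars_apply_eq, mul_comm] using h y (by simpa using hy)
  have hcoeff := congr_fun (ofScalars_series_injective ℂ ℂ <|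
    hP.hasFPowerSeriesAt.eq_formalMultilinearSeries hP.analyticAt.hasFPowerSeriesAt) n
  rw [hcoeff, mul_div_cancel₀ _ (by exact_mod_cast n.factorial_ne_zero)]

theorem deriv_eq_of_hasSum_logCoeff {γ : ℕ → ℂ} {g : ℂ → ℂ}
    (hg : ∀ z ∈ ball (0 : ℂ) 1, HasSum (fun n => 2 * γ (n + 1) * z ^ (n + 1)) (g z)) :
    deriv g 0 = 2 * γ 1 ∧ deriv (deriv g) 0 = 4 * γ 2 := by
  have hsum : ∀ z ∈ ball (0 : ℂ) (1 : ℝ≥0),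
      HasSum (fun n => 2 * γ n * z ^ n) (g z + 2 * γ 0) := fun z hz => by
    simpa using (hasSum_nat_add_iff' 1).mp (by simpa using hg z (by simpa using hz))
  have hderiv : deriv (fun z => g z + 2 * γ 0) = deriv g := funext fun _ => deriv_add_const _
  have h1 := iteratedDeriv_eq_factorial_mul_of_hasSum one_pos hsum 1
  have h2 := iteratedDeriv_eq_factorial_mul_of_hasSum one_pos hsum 2
  norm_num [iteratedDeriv_succ', hderiv] at h1 h2
  exact ⟨h1, by rw [h2]; ring⟩

theorem norm_sub_le_norm_one_sub_conj_mul {a z : ℂ} (ha : ‖a‖ ≤ 1) (hz : ‖z‖ ≤ 1) :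
    ‖z - a‖ ≤ ‖1 - conj a * z‖ := by
  have key : ‖1 - conj a * z‖ ^ 2 - ‖z - a‖ ^ 2 = (1 - ‖a‖ ^ 2) * (1 - ‖z‖ ^ 2) := by
    simp only [Complex.sq_norm, normSq_apply, sub_re, sub_im, mul_re, mul_im, one_re, one_im,
      conj_re, conj_im]
    ring
  have : 0 ≤ (1 - ‖a‖ ^ 2) * (1 - ‖z‖ ^ 2) := by
    apply mul_nonneg <;> nlinarith [norm_nonneg a, norm_nonneg z]
  exact (sq_le_sq₀ (norm_nonneg _) (norm_nonneg _)).mp (by linarith)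

/-- The Schwarz–Pick inequality at the origin. -/
theorem norm_deriv_zero_le_one_sub_sq {φ : ℂ → ℂ} (hd : DifferentiableOn ℂ φ (ball 0 1))
    (hφ : MapsTo φ (ball 0 1) (closedBall 0 1)) : ‖deriv φ 0‖ ≤ 1 - ‖φ 0‖ ^ 2 := by
  have h0 : (0 : ℂ) ∈ ball (0 : ℂ) 1 := mem_ball_self one_pos
  set a := φ 0
  have ha : ‖a‖ ≤ 1 := by simpa using hφ h0
  rcases ha.eq_or_lt with ha | ha
  · have hmax : IsMaxOn (norm ∘ φ) (ball 0 1) 0 := fun z hz =>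
      (mem_closedBall_zero_iff.mp (hφ hz)).trans ha.ge
    have hconst := eqOn_of_isPreconnected_of_isMaxOn_norm (convex_ball (0 : ℂ) 1).isPreconnected
      isOpen_ball hd h0 hmax
    rw [(hconst.eventuallyEq_of_mem (isOpen_ball.mem_nhds h0)).deriv_eq, ha,
      show deriv (Function.const ℂ a) 0 = 0 from deriv_const 0 a]
    norm_num
  have hden : ∀ z ∈ ball (0 : ℂ) 1, 1 - conj a * φ z ≠ 0 := fun z hz h => by
    have : ‖conj a * φ z‖ < 1 := by
      rw [norm_mul, Complex.norm_conj]
      exact mul_lt_one_of_nonneg_of_lt_one_left (norm_nonneg _) ha (by simpa using hφ hz)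
    rw [← sub_eq_zero.mp h, norm_one] at this
    exact this.false
  set ψ := fun z => (φ z - a) / (1 - conj a * φ z)
  have hψd : DifferentiableOn ℂ ψ (ball 0 1) :=
    (hd.sub_const a).div ((differentiableOn_const 1).sub (hd.const_mul _)) hden
  have hψ : MapsTo ψ (ball 0 1) (closedBall (ψ 0) 1) := fun z hz => by
    simp only [ψ, a, sub_self, zero_div, mem_closedBall_zero_iff, norm_div]
    exact div_le_one_of_le₀ (norm_sub_le_norm_one_sub_conj_mul ha.le (by simpa using hφ hz))
      (norm_nonneg _)
  have hD : (1 - conj a * a : ℂ) = ((1 - ‖a‖ ^ 2 : ℝ) : ℂ) := by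
    rw [mul_comm, mul_conj, normSq_eq_norm_sq]; push_cast; ring
  have hDpos : 0 < 1 - ‖a‖ ^ 2 := by nlinarith [norm_nonneg a]
  have hφ' := (hd.differentiableAt (isOpen_ball.mem_nhds h0)).hasDerivAt
  have hψ' : deriv ψ 0 = deriv φ 0 / ((1 - ‖a‖ ^ 2 : ℝ) : ℂ) := by
    rw [((hφ'.sub_const a).fun_div ((hφ'.const_mul _).const_sub 1) (hden 0 h0)).deriv, ← hD]
    simp only [a, sub_self, zero_mul, sub_zero]
    field_simp [hden 0 h0]
  have := norm_deriv_le_one_of_mapsTo_ball hψd hψ one_pos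
  rwa [hψ', norm_div, norm_real, Real.norm_of_nonneg hDpos.le, div_le_one hDpos] at this

theorem mapsTo_closedBall_of_norm_mul_le_one {φ : ℂ → ℂ} (hd : DifferentiableOn ℂ φ (ball 0 1))
    (h : ∀ z ∈ ball (0 : ℂ) 1, ‖z * φ z‖ ≤ 1) : MapsTo φ (ball 0 1) (closedBall 0 1) := by
  intro z hz
  set w := fun x => x * φ x
  have hw : MapsTo w (ball 0 1) (closedBall (w 0) 1) := fun x hx => by simpa [w] using h x hx
  have hdslope : dslope w 0 z = φ z := by
    rcases eq_or_ne z 0 with rfl | hz0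
    · have hφ := (hd.differentiableAt (isOpen_ball.mem_nhds hz)).hasDerivAt
      rw [dslope_same, ((hasDerivAt_id' 0).fun_mul hφ).deriv]
      simp
    · rw [dslope_of_ne _ hz0, slope_def_field]
      simp only [w, zero_mul, sub_zero]
      field_simp
  have hwd : DifferentiableOn ℂ w (ball 0 1) := differentiableOn_id.mul hd
  simpa [hdslope] using norm_dslope_le_div_of_mapsTo_ball hwd hw hz

theorem norm_lt_norm_add_ofReal {p : ℂ} {c : ℝ} (hc : 0 < c) (hp : -(c / 2) < p.re) :
    ‖p‖ < ‖p + c‖ := by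
  have key : ‖p + c‖ ^ 2 - ‖p‖ ^ 2 = c * (2 * p.re + c) := by
    simp only [Complex.sq_norm, normSq_apply, add_re, add_im, ofReal_re, ofReal_im]
    ring
  have : 0 < c * (2 * p.re + c) := mul_pos hc (by linarith)
  exact (sq_lt_sq₀ (norm_nonneg _) (norm_nonneg _)).mp (by linarith)

/-- Carathéodory's bound on the first two coefficients of `z * q z`, in sharp form. -/
theorem norm_deriv_sub_sq_div_le_of_neg_half_lt_re {c : ℝ} (hc : 0 < c) {q : ℂ → ℂ}
    (hq : DifferentiableOn ℂ q (ball 0 1)) (hre : ∀ z ∈ ball (0 : ℂ) 1, -(c / 2) < (z * q z).re) :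
    ‖deriv q 0 - q 0 ^ 2 / c‖ ≤ c - ‖q 0‖ ^ 2 / c := by
  have h0 : (0 : ℂ) ∈ ball (0 : ℂ) 1 := mem_ball_self one_pos
  have hcC : (c : ℂ) ≠ 0 := ofReal_ne_zero.mpr hc.ne'
  have hlt : ∀ z ∈ ball (0 : ℂ) 1, ‖z * q z‖ < ‖z * q z + c‖ := fun z hz =>
    norm_lt_norm_add_ofReal hc (hre z hz)
  have hne : ∀ z ∈ ball (0 : ℂ) 1, z * q z + c ≠ 0 := fun z hz =>
    norm_pos_iff.mp ((norm_nonneg _).trans_lt (hlt z hz))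
  set φ := fun z => q z / (z * q z + c)
  have hφd : DifferentiableOn ℂ φ (ball 0 1) :=
    hq.div ((differentiableOn_id.mul hq).add_const _) hne
  have hφ : MapsTo φ (ball 0 1) (closedBall 0 1) := by
    refine mapsTo_closedBall_of_norm_mul_le_one hφd fun z hz => ?_
    rw [mul_div_assoc', norm_div]
    exact div_le_one_of_le₀ (hlt z hz).le (norm_nonneg _)
  have hq' := (hq.differentiableAt (isOpen_ball.mem_nhds h0)).hasDerivAt
  have hφ' : deriv φ 0 = (deriv q 0 - q 0 ^ 2 / c) / c := by
    rw [(hq'.fun_div (((hasDerivAt_id' 0).fun_mul hq').add_const (c : ℂ)) (hne 0 h0)).deriv]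
    simp only [zero_mul, zero_add, one_mul]
    field_simp
    ring
  have := norm_deriv_zero_le_one_sub_sq hφd hφ
  rw [hφ', show φ 0 = q 0 / c by simp [φ], norm_div, norm_div, norm_real,
    Real.norm_of_nonneg hc.le, div_le_iff₀ hc] at this
  field_simp at this ⊢
  linarith

theorem norm_le_and_norm_deriv_le_of_neg_half_lt_re {c : ℝ} (hc : 0 < c) {q : ℂ → ℂ}
    (hq : DifferentiableOn ℂ q (ball 0 1)) (hre : ∀ z ∈ ball (0 : ℂ) 1, -(c / 2) < (z * q z).re) :
    ‖q 0‖ ≤ c ∧ ‖deriv q 0‖ ≤ c := by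
  have h := norm_deriv_sub_sq_div_le_of_neg_half_lt_re hc hq hre
  have hsq : ‖q 0 ^ 2 / c‖ = ‖q 0‖ ^ 2 / c := by
    rw [norm_div, norm_pow, norm_real, Real.norm_of_nonneg hc.le]
  refine ⟨?_, ?_⟩
  · have : ‖q 0‖ ^ 2 / c ≤ c := by linarith [norm_nonneg (deriv q 0 - q 0 ^ 2 / c)]
    rw [div_le_iff₀ hc] at this
    nlinarith [norm_nonneg (q 0)]
  · calc ‖deriv q 0‖ ≤ ‖deriv q 0 - q 0 ^ 2 / c‖ + ‖q 0 ^ 2 / c‖ := norm_le_norm_sub_add _ _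
      _ ≤ c := by linarith

/-- The pre-Schwarzian derivative `f'' / f'` of `f z = z * exp (g z)`. -/
def preSchwarzianMulExp (g : ℂ → ℂ) (z : ℂ) : ℂ :=
  (2 * deriv g z + z * deriv g z ^ 2 + z * deriv (deriv g) z) / (1 + z * deriv g z)

section MulExp

variable {f g : ℂ → ℂ} {U : Set ℂ} {z : ℂ}

theorem hasDerivAt_mul_exp (hg : DifferentiableAt ℂ g z) :
    HasDerivAt (fun z => z * exp (g z)) (exp (g z) * (1 + z * deriv g z)) z :=
  ((hasDerivAt_id' z).fun_mul hg.hasDerivAt.cexp).congr_deriv (by ring)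

theorem hasDerivAt_exp_mul_one_add_mul_deriv (hg : DifferentiableAt ℂ g z)
    (hg' : DifferentiableAt ℂ (deriv g) z) :
    HasDerivAt (fun z => exp (g z) * (1 + z * deriv g z))
      (exp (g z) * (2 * deriv g z + z * deriv g z ^ 2 + z * deriv (deriv g) z)) z :=
  (hg.hasDerivAt.cexp.fun_mul (((hasDerivAt_id' z).fun_mul hg'.hasDerivAt).const_add 1)).congr_deriv
    (by ring)

theorem eqOn_deriv_of_eqOn_mul_exp (hU : IsOpen U) (hg : AnalyticOnNhd ℂ g U)
    (hfg : EqOn f (fun z => z * exp (g z)) U) :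
    EqOn (deriv f) (fun z => exp (g z) * (1 + z * deriv g z)) U := fun z hz =>
  ((hasDerivAt_mul_exp (hg z hz).differentiableAt).congr_of_eventuallyEq
    (hfg.eventuallyEq_of_mem (hU.mem_nhds hz))).deriv

theorem deriv_deriv_div_deriv_of_eqOn_mul_exp (hU : IsOpen U) (hg : AnalyticOnNhd ℂ g U)
    (hfg : EqOn f (fun z => z * exp (g z)) U) (hz : z ∈ U) :
    deriv (deriv f) z / deriv f z = preSchwarzianMulExp g z := by
  have hf' := eqOn_deriv_of_eqOn_mul_exp hU hg hfg
  rw [((hasDerivAt_exp_mul_one_add_mul_deriv (hg z hz).differentiableAt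
    (hg.deriv z hz).differentiableAt).congr_of_eventuallyEq
    (hf'.eventuallyEq_of_mem (hU.mem_nhds hz))).deriv, hf' hz, preSchwarzianMulExp]
  exact mul_div_mul_left _ _ (Complex.exp_ne_zero _)

theorem differentiableOn_preSchwarzianMulExp (hg : AnalyticOnNhd ℂ g U)
    (hne : ∀ z ∈ U, 1 + z * deriv g z ≠ 0) : DifferentiableOn ℂ (preSchwarzianMulExp g) U := by
  have hg1 := hg.deriv.differentiableOn
  have hg2 := hg.deriv.deriv.differentiableOn
  unfold preSchwarzianMulExp
  exact (((hg1.const_mul 2).add (differentiableOn_id.mul (hg1.pow 2))).add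
    (differentiableOn_id.mul hg2)).div ((differentiableOn_id.mul hg1).const_add 1) hne

theorem preSchwarzianMulExp_zero (g : ℂ → ℂ) : preSchwarzianMulExp g 0 = 2 * deriv g 0 := by
  simp [preSchwarzianMulExp]

theorem hasDerivAt_preSchwarzianMulExp_zero (hg : AnalyticAt ℂ g 0) :
    HasDerivAt (preSchwarzianMulExp g) (3 * deriv (deriv g) 0 - deriv g 0 ^ 2) 0 := by
  have hg1 := hg.deriv.differentiableAt.hasDerivAt
  have hg2 := hg.deriv.deriv.differentiableAt.hasDerivAt
  have hid := hasDerivAt_id' (0 : ℂ)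
  refine ((((hg1.const_mul 2).add (hid.fun_mul (hg1.pow 2))).add (hid.fun_mul hg2)).fun_div
    ((hid.fun_mul hg1).const_add 1) (by simp)).congr_deriv ?_
  simp only [Pi.pow_apply, Pi.add_apply, one_mul, Nat.cast_ofNat, Nat.add_one_sub_one, pow_one,
    zero_mul, add_zero, mul_one, one_pow, div_one]
  ring

end MulExp

theorem stmt11_general (c : ℝ) (hc0 : 0 < c)
    (f : ℂ → ℂ) (γ : ℕ → ℂ)
    (hf0 : f 0 = 0)
    (hf' : ∀ z ∈ Metric.ball (0:ℂ) 1, deriv f z ≠ 0)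
    (hF : ∀ z ∈ Metric.ball (0:ℂ) 1,
      (1 + z * deriv (deriv f) z / deriv f z).re > 1 - c/2)
    (hγ : IsLogCoeff f γ) :
    ‖γ 2‖ ≤ (4 * c + c ^ 2) / 48 := by
  obtain ⟨g, hg, -, hgf, hgγ⟩ := hγ
  have hfg : EqOn f (fun z => z * exp (g z)) (ball 0 1) := fun z hz => by
    rcases eq_or_ne z 0 with rfl | hz0
    · simp [hf0]
    · show f z = z * exp (g z)
      rw [hgf z hz hz0, mul_div_cancel₀ _ hz0]
  have hne : ∀ z ∈ ball (0 : ℂ) 1, 1 + z * deriv g z ≠ 0 := fun z hz h =>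
    hf' z hz (by simp [eqOn_deriv_of_eqOn_mul_exp isOpen_ball hg hfg hz, h])
  have hre : ∀ z ∈ ball (0 : ℂ) 1, -(c / 2) < (z * preSchwarzianMulExp g z).re := fun z hz => by
    have := hF z hz
    rw [mul_div_assoc, deriv_deriv_div_deriv_of_eqOn_mul_exp isOpen_ball hg hfg hz, add_re,
      one_re] at this
    linarith
  obtain ⟨hq0, hq1⟩ := norm_le_and_norm_deriv_le_of_neg_half_lt_re hc0
    (differentiableOn_preSchwarzianMulExp hg hne) hre
  obtain ⟨hg1, hg2⟩ := deriv_eq_of_hasSum_logCoeff hgγ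
  rw [preSchwarzianMulExp_zero, hg1] at hq0
  rw [(hasDerivAt_preSchwarzianMulExp_zero (hg 0 (mem_ball_self one_pos))).deriv, hg1, hg2] at hq1
  have h1 : 4 * ‖γ 1‖ ≤ c := by norm_num [norm_mul, ← mul_assoc] at hq0; linarith
  have h2 : 12 * ‖γ 2‖ ≤ c + 4 * ‖γ 1‖ ^ 2 := by
    calc 12 * ‖γ 2‖ = ‖(3 * (4 * γ 2) - (2 * γ 1) ^ 2) + 4 * γ 1 ^ 2‖ := by
          rw [show (3 * (4 * γ 2) - (2 * γ 1) ^ 2) + 4 * γ 1 ^ 2 = 12 * γ 2 by ring]; simp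
      _ ≤ c + 4 * ‖γ 1‖ ^ 2 := (norm_add_le _ _).trans (by simpa using hq1)
  nlinarith [norm_nonneg (γ 1)]

theorem stmt11 (c : ℝ) (hc0 : 0 < c) (hc3 : c ≤ 3)
    (f : ℂ → ℂ) (γ : ℕ → ℂ)
    (hf : AnalyticOnNhd ℂ f (Metric.ball 0 1)) (hf0 : f 0 = 0)
    (hf1 : deriv f 0 = 1)
    (hf' : ∀ z ∈ Metric.ball (0:ℂ) 1, deriv f z ≠ 0)
    (hF : ∀ z ∈ Metric.ball (0:ℂ) 1,
      (1 + z * deriv (deriv f) z / deriv f z).re > 1 - c/2)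
    (hγ : IsLogCoeff f γ) :
    ‖γ 2‖ ≤ (4 * c + c ^ 2) / 48 :=
  stmt11_general c hc0 f γ hf0 hf' hF hγ
end
end
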